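/- arXiv:1204.5631 — 9 statements merged into one kernel-verified Lean document; each statement's English description precedes it below -/
import Mathlib

section
/- For every symmetric 2-colouring c there exist x : Bool and F : ℕ → ℕ such that for every k one has F k ≥ k, and for all i, j ≤ k, if F i < F j then c (F i) (F j) = x (i.e. the image of F is an infinite pairwise monochromatic set of colour x). -/
open Set

private lemma ramsey_step (c : ℕ → ℕ → Bool) (S : Set ℕ) (hS : S.Infinite) :
    ∃ p : ℕ × Set ℕ, p.1 ∈ S ∧ p.2 ⊆ S ∧ p.2.Infinite ∧ (∀ m ∈ p.2, p.1 < m) ∧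
      (∀ m ∈ p.2, ∀ m' ∈ p.2, c p.1 m = c p.1 m') := by
  obtain ⟨b, hb⟩ := hS.nonempty
  have hU : (S \ Set.Iic b).Infinite := hS.diff (Set.finite_Iic b)
  have hsplit : (S \ Set.Iic b) =
      {m ∈ S \ Set.Iic b | c b m = true} ∪ {m ∈ S \ Set.Iic b | c b m = false} := by
    ext m
    simp only [mem_union, mem_setOf_eq]
    constructor
    · intro h
      rcases Bool.eq_false_or_eq_true (c b m) with h' | h' <;> tauto
    · tauto
  rw [hsplit] at hU
  rcases Set.infinite_union.mp hU with h | h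
  · refine ⟨(b, _), hb, fun m hm => hm.1.1, h, fun m hm => ?_,
      fun m hm m' hm' => hm.2.trans hm'.2.symm⟩
    have := hm.1.2
    simp only [mem_Iic, not_le] at this
    exact this
  · refine ⟨(b, _), hb, fun m hm => hm.1.1, h, fun m hm => ?_,
      fun m hm m' hm' => hm.2.trans hm'.2.symm⟩
    have := hm.1.2
    simp only [mem_Iic, not_le] at this
    exact this

private noncomputable def ramseyG (c : ℕ → ℕ → Bool) : ℕ → {q : ℕ × Set ℕ // q.2.Infinite}
  | 0 => ⟨(0, Set.univ), Set.infinite_univ⟩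
  | n + 1 =>
    ⟨(ramsey_step c (ramseyG c n).1.2 (ramseyG c n).2).choose,
      (ramsey_step c (ramseyG c n).1.2 (ramseyG c n).2).choose_spec.2.2.1⟩

private lemma ramseyG_spec (c : ℕ → ℕ → Bool) (n : ℕ) :
    (ramseyG c (n + 1)).1.1 ∈ (ramseyG c n).1.2 ∧
    (ramseyG c (n + 1)).1.2 ⊆ (ramseyG c n).1.2 ∧
    (ramseyG c (n + 1)).1.2.Infinite ∧
    (∀ m ∈ (ramseyG c (n + 1)).1.2, (ramseyG c (n + 1)).1.1 < m) ∧
    (∀ m ∈ (ramseyG c (n + 1)).1.2, ∀ m' ∈ (ramseyG c (n + 1)).1.2,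
      c (ramseyG c (n + 1)).1.1 m = c (ramseyG c (n + 1)).1.1 m') := by
  show (ramsey_step c (ramseyG c n).1.2 (ramseyG c n).2).choose.1 ∈ _ ∧ _
  exact (ramsey_step c (ramseyG c n).1.2 (ramseyG c n).2).choose_spec

/-- Ramsey's theorem for pairs and two colours: the image of `F` is an infinite pairwise
monochromatic set of colour `x`. -/
theorem ramsey_pairs (c : ℕ → ℕ → Bool) (hc : ∀ i j, c i j = c j i) :
    ∃ (x : Bool) (F : ℕ → ℕ), ∀ k : ℕ,
      k ≤ F k ∧ ∀ i ≤ k, ∀ j ≤ k, F i < F j → c (F i) (F j) = x := by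
  classical
  set a : ℕ → ℕ := fun n => (ramseyG c (n + 1)).1.1 with ha
  set S : ℕ → Set ℕ := fun n => (ramseyG c (n + 1)).1.2 with hSdef
  -- basic facts
  have hmemS : ∀ n, a (n + 1) ∈ S n := fun n => (ramseyG_spec c (n + 1)).1
  have hsub : ∀ n, S (n + 1) ⊆ S n := fun n => (ramseyG_spec c (n + 1)).2.1
  have hlt : ∀ n, ∀ m ∈ S n, a n < m := fun n => (ramseyG_spec c n).2.2.2.1
  have hconst : ∀ n, ∀ m ∈ S n, ∀ m' ∈ S n, c (a n) m = c (a n) m' :=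
    fun n => (ramseyG_spec c n).2.2.2.2
  have hSmono : ∀ n m, n ≤ m → S m ⊆ S n := by
    intro n m hnm
    induction m, hnm using Nat.le_induction with
    | base => exact subset_refl _
    | succ m hm ih => exact (hsub m).trans ih
  have hmem : ∀ n m, n < m → a m ∈ S n := by
    intro n m hnm
    obtain ⟨k, rfl⟩ := Nat.exists_eq_add_of_lt hnm
    exact hSmono n (n + k) (Nat.le_add_right n k) (hmemS (n + k))
  have haMono : StrictMono a := by
    apply strictMono_nat_of_lt_succ
    intro n
    exact hlt n (a (n + 1)) (hmemS n)
  -- the colour seen from `a n`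
  set bit : ℕ → Bool := fun n => c (a n) (a (n + 1)) with hbit
  have hbitconst : ∀ n m, n < m → c (a n) (a m) = bit n := by
    intro n m hnm
    exact hconst n (a m) (hmem n m hnm) (a (n + 1)) (hmemS n)
  -- pigeonhole on `bit`
  have hpigeon : ∃ x : Bool, {n | bit n = x}.Infinite := by
    by_cases h : {n | bit n = true}.Infinite
    · exact ⟨true, h⟩
    · refine ⟨false, ?_⟩
      have hcomp : {n | bit n = false} = {n | bit n = true}ᶜ := by
        ext n
        simp only [mem_setOf_eq, mem_compl_iff]
        cases hbn : bit n <;> simp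
      rw [hcomp]
      exact (Set.not_infinite.mp h).infinite_compl
  obtain ⟨x, hx⟩ := hpigeon
  have hx' : (setOf fun n => bit n = x).Infinite := hx
  set e : ℕ → ℕ := Nat.nth (fun n => bit n = x) with he
  have heMono : StrictMono e := Nat.nth_strictMono hx'
  have heMem : ∀ k, bit (e k) = x := fun k => Nat.nth_mem_of_infinite hx' k
  refine ⟨x, fun k => a (e k), fun k => ⟨?_, ?_⟩⟩
  · exact le_trans (heMono.le_apply) (haMono.le_apply)
  · intro i _ j _ hij
    have hij' : e i < e j := haMono.lt_iff_lt.mp hij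
    rw [hbitconst (e i) (e j) hij']
    exact heMem i
end

section
/- The Erdős–Rado relation ≺ is a tree order on ℕ: (i) ≺ is transitive; (ii) for every i, any two distinct predecessors j ≺ i and k ≺ i are ≺-comparable (j ≺ k or k ≺ j); and (iii) branches are min-monochromatic, i.e. if k ≺ i and i ≺ j then c k i = c k j. -/
/-- The Erdős–Rado relation `≺` on ℕ determined by the symmetric colouring `c`:
`j ≺ i` iff `j < i` and `c k i = c k j` for every `k ≺ j`. -/
def ERprec (c : ℕ → ℕ → Bool) (j i : ℕ) : Prop :=
  ∃ _ : j < i, ∀ k, ERprec c k j → c k i = c k j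
termination_by i
decreasing_by omega

/-- `Tp c s k` is the predicate `T'(s, k)`: there is `k'` with `|s| ≤ k' ≤ k` such that
`s` is the characteristic function (with `0 = false`) of the `≺`-predecessors of `k'`
below `|s|`. -/
def Tp (c : ℕ → ℕ → Bool) (s : List Bool) (k : ℕ) : Prop :=
  ∃ k', s.length ≤ k' ∧ k' ≤ k ∧ ∀ i (h : i < s.length), (s[i]'h = false ↔ ERprec c i k')

/-- `TB c β s` is `T^β(s) := T'(s, β |s|)`. -/
def TB (c : ℕ → ℕ → Bool) (β : ℕ → ℕ) (s : List Bool) : Prop :=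
  Tp c s (β s.length)

/-- `β` is an ideal Skolem function for `T` if `T'(s,k) → T'(s, β |s|)` for all `s`, `k`. -/
def IdealSkolem (c : ℕ → ℕ → Bool) (β : ℕ → ℕ) : Prop :=
  ∀ (s : List Bool) (k : ℕ), Tp c s k → Tp c s (β s.length)

/-- `Depth c β s n` is `Depth_n(T^β_s)`: the subtree of `T^β` at `s` has a branch of
length `n`. -/
def Depth (c : ℕ → ℕ → Bool) (β : ℕ → ℕ) (s : List Bool) (n : ℕ) : Prop :=
  ∃ t : List Bool, t.length = n ∧ TB c β (s ++ t)


lemma ERprec_iff (c : ℕ → ℕ → Bool) (j i : ℕ) :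
    ERprec c j i ↔ j < i ∧ ∀ k, ERprec c k j → c k i = c k j := by
  rw [ERprec]
  exact exists_prop

lemma ERprec_trans (c : ℕ → ℕ → Bool) :
    ∀ j, ∀ i, ERprec c i j → ∀ m, ERprec c m i → ERprec c m j := by
  intro j
  induction j using Nat.strong_induction_on with
  | _ j IH =>
    intro i hij m hmi
    rw [ERprec_iff] at hij hmi ⊢
    obtain ⟨hij1, hij2⟩ := hij
    obtain ⟨hmi1, hmi2⟩ := hmi
    refine ⟨by omega, fun k hkm => ?_⟩
    have hki : ERprec c k i := IH i hij1 m ((ERprec_iff c m i).2 ⟨hmi1, hmi2⟩) k hkm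
    rw [hij2 k hki, hmi2 k hkm]

lemma ERprec_cmp (c : ℕ → ℕ → Bool) :
    ∀ j, ∀ i k, ERprec c j i → ERprec c k i → j < k → ERprec c j k := by
  intro j
  induction j using Nat.strong_induction_on with
  | _ j IH =>
    intro i k hji hki hjk
    rw [ERprec_iff] at hji ⊢
    obtain ⟨hji1, hji2⟩ := hji
    refine ⟨hjk, fun m hmj => ?_⟩
    have hmi : ERprec c m i := ERprec_trans c i _ ((ERprec_iff c j i).2 ⟨hji1, hji2⟩) m hmj
    have hmlt : m < j := ((ERprec_iff c m j).1 hmj).1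
    have hmk : ERprec c m k := IH m hmlt i k hmi hki (lt_trans hmlt hjk)
    have := ((ERprec_iff c k i).1 hki).2 m hmk
    rw [← this, hji2 m hmj]

/-- The Erdős–Rado relation is a tree order: it is transitive, any two distinct
predecessors of a node are comparable, and branches are min-monochromatic. -/
theorem erdos_rado_tree_order (c : ℕ → ℕ → Bool) (hc : ∀ i j, c i j = c j i) :
    (∀ i j k : ℕ, ERprec c i j → ERprec c j k → ERprec c i k) ∧
    (∀ i j k : ℕ, ERprec c j i → ERprec c k i → j ≠ k →
      ERprec c j k ∨ ERprec c k j) ∧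
    (∀ i j k : ℕ, ERprec c k i → ERprec c i j → c k i = c k j) := by
  refine ⟨fun i j k h1 h2 => ERprec_trans c k j h2 i h1, fun i j k hji hki hne => ?_,
    fun i j k hki hij => (((ERprec_iff c i j).1 hij).2 k hki).symm⟩
  rcases lt_trichotomy j k with h | h | h
  · exact Or.inl (ERprec_cmp c j i k hji hki h)
  · exact absurd h hne
  · exact Or.inr (ERprec_cmp c k i j hki hji h)
end

section
/- The predicate T defines an infinite binary tree with the following properties: (i) for all finite 0-1 sequences s, t and all k, T'(s * t, k) → T'(s, k) (in particular T is prefix-closed); (ii) for all s, k, l, T'(s, k) → T'(s, k + l) (monotonicity in the bound); (iii) for every n, the 0-1 sequence s of length n defined by s_i = 0 ↔ i ≺ n satisfies T'(s, n), hence T has branches of every length. -/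
/-- `T` is an infinite binary tree: (i) `T'` is closed under restriction to prefixes,
(ii) `T'` is monotone in the bound, and (iii) for every `n` the characteristic sequence
of the predecessors of `n` witnesses that `T` has a branch of length `n`. -/
theorem binary_erdos_rado_tree_properties (c : ℕ → ℕ → Bool)
    (hc : ∀ i j, c i j = c j i) :
    (∀ (s t : List Bool) (k : ℕ), Tp c (s ++ t) k → Tp c s k) ∧
    (∀ (s : List Bool) (k l : ℕ), Tp c s k → Tp c s (k + l)) ∧
    (∀ n : ℕ, ∃ s : List Bool, s.length = n ∧
      (∀ i (h : i < s.length), (s[i]'h = false ↔ ERprec c i n)) ∧ Tp c s n) := by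
  refine ⟨?_, ?_, ?_⟩
  · rintro s t k ⟨k', h1, h2, h3⟩
    refine ⟨k', ?_, h2, fun i h => ?_⟩
    · simp at h1; omega
    · have h' : i < (s ++ t).length := by simp; omega
      have := h3 i h'
      rwa [List.getElem_append_left h] at this
  · rintro s k l ⟨k', h1, h2, h3⟩
    exact ⟨k', h1, by omega, h3⟩
  · intro n
    classical
    refine ⟨List.ofFn (fun i : Fin n => ! decide (ERprec c i n)), by simp, ?_⟩
    have key : ∀ i (h : i < (List.ofFn (fun i : Fin n => ! decide (ERprec c i n))).length),
        ((List.ofFn (fun i : Fin n => ! decide (ERprec c i n)))[i]'h = false ↔ ERprec c i n) := by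
      intro i h
      simp
    exact ⟨key, ⟨n, by simp, le_rfl, key⟩⟩
end

section
/- Let β be an ideal Skolem function. Then there exists an infinite sequence α : ℕ → Bool such that for every n there exists k with n ≤ k ≤ β n and, for all i < n, α i = 0 ↔ i ≺ k (i.e. every initial segment of α lies in the decidable tree T^β). -/
open Classical in
theorem Tp_of_append {c : ℕ → ℕ → Bool} {s t : List Bool} {k : ℕ}
    (h : Tp c (s ++ t) k) : Tp c s k := by
  obtain ⟨k', h1, h2, h3⟩ := h
  refine ⟨k', le_trans (by simp) h1, h2, fun i hi => ?_⟩
  have := h3 i (by simp; omega)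
  rwa [List.getElem_append_left] at this

theorem TB_of_append {c : ℕ → ℕ → Bool} {β : ℕ → ℕ} (hβ : IdealSkolem c β)
    {s t : List Bool} (h : TB c β (s ++ t)) : TB c β s :=
  hβ s _ (Tp_of_append h)

theorem Depth_mono {c : ℕ → ℕ → Bool} {β : ℕ → ℕ} (hβ : IdealSkolem c β)
    {s : List Bool} {n m : ℕ} (hnm : n ≤ m) (h : Depth c β s m) : Depth c β s n := by
  obtain ⟨t, ht, htb⟩ := h
  refine ⟨t.take n, by simp [ht, hnm], ?_⟩
  have : s ++ t = (s ++ t.take n) ++ t.drop n := by simp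
  rw [this] at htb
  exact TB_of_append hβ htb

open Classical in
theorem Depth_root {c : ℕ → ℕ → Bool} {β : ℕ → ℕ} (hβ : IdealSkolem c β)
    (n : ℕ) : Depth c β [] n := by
  refine ⟨List.ofFn (fun i : Fin n => if ERprec c i n then false else true), by simp, ?_⟩
  have hTp : Tp c (List.ofFn (fun i : Fin n => if ERprec c i n then false else true)) n := by
    refine ⟨n, by simp, le_refl n, fun i hi => ?_⟩
    simp only [List.getElem_ofFn]
    by_cases h : ERprec c i n <;> simp [h]
  have := hβ _ n hTp
  simpa [TB] using this

theorem Depth_step {c : ℕ → ℕ → Bool} {β : ℕ → ℕ} (hβ : IdealSkolem c β)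
    {s : List Bool} (h : ∀ m, Depth c β s m) :
    ∃ b, ∀ m, Depth c β (s ++ [b]) m := by
  by_contra hcon
  push_neg at hcon
  obtain ⟨m0, hm0⟩ := hcon false
  obtain ⟨m1, hm1⟩ := hcon true
  obtain ⟨t, ht, htb⟩ := h (max m0 m1 + 1)
  match t, ht with
  | b :: t', ht =>
    have : s ++ (b :: t') = (s ++ [b]) ++ t' := by simp
    rw [this] at htb
    have hd : Depth c β (s ++ [b]) (max m0 m1) := ⟨t', by simp only [List.length_cons] at ht; omega, htb⟩
    cases b with
    | false => exact hm0 (Depth_mono hβ (le_max_left _ _) hd)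
    | true => exact hm1 (Depth_mono hβ (le_max_right _ _) hd)

noncomputable def chain (c : ℕ → ℕ → Bool) (β : ℕ → ℕ) (hβ : IdealSkolem c β) :
    (n : ℕ) → {s : List Bool // s.length = n ∧ ∀ m, Depth c β s m}
  | 0 => ⟨[], rfl, Depth_root hβ⟩
  | n + 1 =>
    let p := chain c β hβ n
    ⟨p.1 ++ [Classical.choose (Depth_step hβ p.2.2)], by simp [p.2.1],
      Classical.choose_spec (Depth_step hβ p.2.2)⟩

theorem chain_prefix (c : ℕ → ℕ → Bool) (β : ℕ → ℕ) (hβ : IdealSkolem c β)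
    {n m : ℕ} (h : n ≤ m) : (chain c β hβ n).1 <+: (chain c β hβ m).1 := by
  induction m with
  | zero =>
    have hn : n = 0 := by omega
    subst hn; exact List.prefix_refl _
  | succ m ih =>
    rcases Nat.lt_or_ge n (m+1) with h' | h'
    · exact (ih (by omega)).trans (by simp [chain])
    · have : n = m + 1 := by omega
      subst this; exact List.prefix_refl _

/-- Weak König -/
theorem infinite_branch_of_T_beta (c : ℕ → ℕ → Bool) (hc : ∀ i j, c i j = c j i)
    (β : ℕ → ℕ) (hβ : IdealSkolem c β) :
    ∃ α : ℕ → Bool, ∀ n : ℕ, ∃ k, n ≤ k ∧ k ≤ β n ∧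
      ∀ i < n, (α i = false ↔ ERprec c i k) := by
  refine ⟨fun i => (chain c β hβ (i+1)).1[i]'(by rw [(chain c β hβ (i+1)).2.1]; omega), fun n => ?_⟩
  obtain ⟨t, ht0, htb⟩ := (chain c β hβ n).2.2 0
  rw [List.length_eq_zero_iff.mp ht0, List.append_nil] at htb
  obtain ⟨k, hk1, hk2, hk3⟩ := htb
  rw [(chain c β hβ n).2.1] at hk1 hk2
  refine ⟨k, hk1, hk2, fun i hi => ?_⟩
  have hp := chain_prefix c β hβ (show i + 1 ≤ n by omega)
  have hlen : i < ((chain c β hβ (i+1)).1).length := by rw [(chain c β hβ (i+1)).2.1]; omega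
  simp only []
  rw [hp.getElem hlen]
  exact hk3 i (by rw [(chain c β hβ n).2.1]; omega)
end

section
/- Suppose β : ℕ → ℕ and α : ℕ → Bool satisfy: for every n there exists k with n ≤ k ≤ β n such that for all i < n, α i = 0 ↔ i ≺ k. Then α 0 = 0, and for every n ≥ 1 there exists k with n ≤ k ≤ β(β n + 1) and α k = 0. Consequently the function a defined by a 0 = 0 and, for n ≥ 1, a n = the least k ∈ [n, β(β n + 1)] with α k = 0, is well-defined and satisfies a n ≥ n and α (a n) = 0 for all n; in particular α has infinitely many zeros. -/
open Classical in
/-- The function `a`: `a 0 = 0` and, for `n ≥ 1`, `a n` is the least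
`k ∈ [n, β (β n + 1)]` with `α k = 0` (and `0` if no such `k` exists). -/
noncomputable def aFun (β : ℕ → ℕ) (α : ℕ → Bool) (n : ℕ) : ℕ :=
  if n = 0 then 0
  else if h : ∃ k, n ≤ k ∧ k ≤ β (β n + 1) ∧ α k = false then Nat.find h else 0

lemma ERprec.lt {c : ℕ → ℕ → Bool} {j i : ℕ} (h : ERprec c j i) : j < i :=
  ((ERprec_iff c j i).1 h).1

lemma ERprec.color {c : ℕ → ℕ → Bool} {j i : ℕ} (h : ERprec c j i) :
    ∀ k, ERprec c k j → c k i = c k j :=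
  ((ERprec_iff c j i).1 h).2

lemma ERprec_zero {c : ℕ → ℕ → Bool} {i : ℕ} (h : 0 < i) : ERprec c 0 i :=
  (ERprec_iff c 0 i).2 ⟨h, fun k hk => absurd hk.lt (by omega)⟩

lemma ERprec_trans_s7 {c : ℕ → ℕ → Bool} :
    ∀ a b d : ℕ, ERprec c a b → ERprec c b d → ERprec c a d := by
  intro a
  induction a using Nat.strong_induction_on with
  | _ a ih =>
    intro b d hab hbd
    refine (ERprec_iff c a d).2 ⟨hab.lt.trans hbd.lt, ?_⟩
    intro r hra
    have hrb : ERprec c r b := ih r hra.lt a b hra hab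
    calc c r d = c r b := hbd.color r hrb
      _ = c r a := hab.color r hra

lemma ERprec_comp {c : ℕ → ℕ → Bool} :
    ∀ a b d : ℕ, ERprec c a d → ERprec c b d → a < b → ERprec c a b := by
  intro a
  induction a using Nat.strong_induction_on with
  | _ a ih =>
    intro b d had hbd hlt
    refine (ERprec_iff c a b).2 ⟨hlt, ?_⟩
    intro r hra
    have hrd : ERprec c r d := ERprec_trans_s7 r a d hra had
    have hrb : ERprec c r b := ih r hra.lt b d hrd hbd (hra.lt.trans hlt)
    calc c r b = c r d := (hbd.color r hrb).symm
      _ = c r a := had.color r hra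

/-- Key lemma: if `p ≺ k`, every `≺`-predecessor of `k` below `bnd ≤ k` is `≤ p`,
and `x ∈ (p, bnd)` is colour-compatible with `p`'s predecessors, then `c p x ≠ c p k`. -/
lemma ERkey {c : ℕ → ℕ → Bool} {p k bnd : ℕ} (hpk : ERprec c p k) (hbk : bnd ≤ k)
    (hmax : ∀ q, ERprec c q k → q < bnd → q ≤ p)
    {x : ℕ} (hpx : p < x) (hxb : x < bnd)
    (hPx : ∀ r, ERprec c r p → c r x = c r p) :
    c p x ≠ c p k := by
  intro heq
  classical
  have hex : ∃ y, p < y ∧ (∀ r, ERprec c r p → c r y = c r p) ∧ c p y = c p k :=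
    ⟨x, hpx, hPx, heq⟩
  set l := Nat.find hex with hl
  obtain ⟨hpl, hPl, hcl⟩ := Nat.find_spec hex
  have hlx : l ≤ x := Nat.find_min' hex ⟨hpx, hPx, heq⟩
  have hlb : l < bnd := lt_of_le_of_lt hlx hxb
  have hplE : ERprec c p l := (ERprec_iff c p l).2 ⟨hpl, hPl⟩
  -- show l ≺ k
  have hlk : ERprec c l k := by
    refine (ERprec_iff c l k).2 ⟨lt_of_lt_of_le hlb hbk, ?_⟩
    intro r hrl
    rcases lt_trichotomy r p with hrp | hrp | hrp
    · have hrp' : ERprec c r p := ERprec_comp r p l hrl hplE hrp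
      calc c r k = c r p := hpk.color r hrp'
        _ = c r l := (hPl r hrp').symm
    · subst hrp; exact hcl.symm
    · -- r would be a smaller element of the set than l
      exfalso
      have hprE : ERprec c p r := ERprec_comp p r l hplE hrl hrp
      have hPr : ∀ r', ERprec c r' p → c r' r = c r' p := hprE.color
      have hcpr : c p r = c p l := (hrl.color p hprE).symm
      exact Nat.find_min hex hrl.lt ⟨hrp, hPr, hcpr.trans hcl⟩
  have := hmax l hlk hlb
  omega


lemma branch_alpha_zero {c : ℕ → ℕ → Bool} {β : ℕ → ℕ} {α : ℕ → Bool}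
    (h : ∀ n : ℕ, ∃ k, n ≤ k ∧ k ≤ β n ∧ ∀ i < n, (α i = false ↔ ERprec c i k)) :
    α 0 = false := by
  obtain ⟨k, hk1, -, hch⟩ := h 1
  exact (hch 0 (by omega)).2 (ERprec_zero (by omega))

lemma branch_interval_zero {c : ℕ → ℕ → Bool} {β : ℕ → ℕ} {α : ℕ → Bool}
    (h : ∀ n : ℕ, ∃ k, n ≤ k ∧ k ≤ β n ∧ ∀ i < n, (α i = false ↔ ERprec c i k))
    (n : ℕ) (hn : 1 ≤ n) : ∃ k, n ≤ k ∧ k ≤ β (β n + 1) ∧ α k = false := by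
  by_contra hno
  push_neg at hno
  have hno' : ∀ k, n ≤ k → k ≤ β (β n + 1) → α k = true := by
    intro k h1 h2
    have := hno k h1 h2
    cases hk : α k with
    | false => exact absurd hk this
    | true => rfl
  have hα0 : α 0 = false := branch_alpha_zero h
  obtain ⟨k₁, hnk₁, hk₁b, hch₁⟩ := h n
  set m := β n + 1 with hm
  obtain ⟨k₂, hmk₂, hk₂b, hch₂⟩ := h m
  obtain ⟨k₄, hk₂k₄, hk₄b, hch₄⟩ := h (k₂ + 1)
  have hk₁m : k₁ < m := by omega
  have hmβm : m ≤ β m := le_trans hmk₂ hk₂b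
  -- p : largest zero of α below n
  set p := Nat.findGreatest (fun k => α k = false) (n - 1) with hpdef
  have hp : α p = false := Nat.findGreatest_spec (P := fun k => α k = false) (m := 0) (by omega) hα0
  have hpn : p < n := lt_of_le_of_lt (Nat.findGreatest_le (n - 1)) (by omega)
  have hpmax : ∀ q, q < n → α q = false → q ≤ p := by
    intro q hq hqz
    by_contra hqp
    exact @Nat.findGreatest_is_greatest q (fun k => α k = false) _ (n - 1)
      (by rw [← hpdef]; omega) (by omega) hqz
  -- any zero below k₂ + 1 is ≤ p
  have hzero : ∀ q, q ≤ k₂ → α q = false → q ≤ p := by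
    intro q hq hqz
    rcases lt_or_ge q n with hql | hql
    · exact hpmax q hql hqz
    · exact absurd (hno' q hql (by omega)) (by simp [hqz])
  have hpk₁ : ERprec c p k₁ := (hch₁ p hpn).1 hp
  have hpk₂ : ERprec c p k₂ := (hch₂ p (by omega)).1 hp
  have hpk₄ : ERprec c p k₄ := (hch₄ p (by omega)).1 hp
  have hmax₂ : ∀ q, ERprec c q k₂ → q < m → q ≤ p := by
    intro q hq hqm
    exact hzero q (by omega) ((hch₂ q hqm).2 hq)
  have hmax₄ : ∀ q, ERprec c q k₄ → q < k₂ + 1 → q ≤ p := by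
    intro q hq hqm
    exact hzero q (by omega) ((hch₄ q hqm).2 hq)
  have hd1 : c p k₁ ≠ c p k₂ :=
    ERkey hpk₂ hmk₂ hmax₂ (by omega) hk₁m hpk₁.color
  have hd2 : c p k₁ ≠ c p k₄ :=
    ERkey hpk₄ hk₂k₄ hmax₄ (by omega) (by omega) hpk₁.color
  have hd3 : c p k₂ ≠ c p k₄ :=
    ERkey hpk₄ hk₂k₄ hmax₄ (lt_of_lt_of_le hpn (by omega)) (by omega) hpk₂.color
  revert hd1 hd2 hd3
  cases c p k₁ <;> cases c p k₂ <;> cases c p k₄ <;> decide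

/-- An infinite branch of `T^β` encodes an infinite branch of the Erdős–Rado tree:
`α 0 = 0`, every interval `[n, β (β n + 1)]` with `n ≥ 1` contains a zero of `α`, hence
`aFun` is well-defined with `a n ≥ n` and `α (a n) = 0` for all `n`; in particular `α`
has infinitely many zeros. -/
theorem branch_has_infinitely_many_zeros (c : ℕ → ℕ → Bool)
    (hc : ∀ i j, c i j = c j i) (β : ℕ → ℕ) (α : ℕ → Bool)
    (h : ∀ n : ℕ, ∃ k, n ≤ k ∧ k ≤ β n ∧ ∀ i < n, (α i = false ↔ ERprec c i k)) :
    α 0 = false ∧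
    (∀ n, 1 ≤ n → ∃ k, n ≤ k ∧ k ≤ β (β n + 1) ∧ α k = false) ∧
    (∀ n, n ≤ aFun β α n ∧ α (aFun β α n) = false) ∧
    (∀ m, ∃ k, m ≤ k ∧ α k = false) := by
  have h0 : α 0 = false := branch_alpha_zero h
  have h2 : ∀ n, 1 ≤ n → ∃ k, n ≤ k ∧ k ≤ β (β n + 1) ∧ α k = false :=
    fun n hn => branch_interval_zero h n hn
  have h3 : ∀ n, n ≤ aFun β α n ∧ α (aFun β α n) = false := by
    intro n
    rcases Nat.eq_zero_or_pos n with rfl | hn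
    · simp [aFun, h0]
    · have hex := h2 n hn
      rw [aFun, if_neg (by omega), dif_pos hex]
      exact ⟨(Nat.find_spec hex).1, (Nat.find_spec hex).2.2⟩
  exact ⟨h0, h2, h3, fun m => ⟨aFun β α m, (h3 m).1, (h3 m).2⟩⟩
end

section
/- Let β be an ideal Skolem function. Then the tree T^β has branches of arbitrary length: for every n there exists a 0-1 sequence s of length n and a k' with n ≤ k' ≤ β n such that for all i < n, s_i = 0 ↔ i ≺ k'. -/
/-- Given an ideal Skolem function `β`, the tree `T^β` has branches of arbitrary
length. -/
theorem T_beta_has_arbitrary_branches (c : ℕ → ℕ → Bool) (hc : ∀ i j, c i j = c j i)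
    (β : ℕ → ℕ) (hβ : IdealSkolem c β) :
    ∀ n : ℕ, ∃ s : List Bool, s.length = n ∧ ∃ k', n ≤ k' ∧ k' ≤ β n ∧
      ∀ i (h : i < s.length), (s[i]'h = false ↔ ERprec c i k') := by
  classical
  intro n
  set s : List Bool := List.ofFn (fun i : Fin n => !decide (ERprec c i n)) with hs
  have hlen : s.length = n := by simp [hs]
  have hval : ∀ i (h : i < s.length), (s[i]'h = false ↔ ERprec c i n) := by
    intro i h
    simp [hs]
  have hTp : Tp c s n := ⟨n, le_of_eq hlen, le_refl n, hval⟩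
  have := hβ s n hTp
  rw [hlen] at this
  obtain ⟨k', h1, h2, h3⟩ := this
  exact ⟨s, hlen, k', hlen ▸ h1, h2, h3⟩
end

section
/- Let β be an ideal Skolem function and define, for a finite 0-1 sequence s, the selection function ε_s : (Bool → ℕ) → Bool by: ε_s p = 0 if Depth_{p(0)+1}(T^β_s) → Depth_{p(0)}(T^β_{s*0}), and ε_s p = 1 otherwise. Then for all s and all p : Bool → ℕ: Depth_{p(ε_s p)+1}(T^β_s) → Depth_{p(ε_s p)}(T^β_{s * ε_s p}). -/
open Classical in
/-- The selection function interpreting weak König's lemma on `T^β`: pick `0 = false`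
if extendibility of `s` by depth `p 0 + 1` implies extendibility of `s * 0` by depth
`p 0`, and `1 = true` otherwise. -/
noncomputable def wklSel (c : ℕ → ℕ → Bool) (β : ℕ → ℕ) (s : List Bool)
    (p : Bool → ℕ) : Bool :=
  if Depth c β s (p false + 1) → Depth c β (s ++ [false]) (p false) then false
  else true

/-- The selection functions `wklSel` are sound: for all `s` and `p`,
`Depth_(p (ε_s p) + 1) (T^β_s) → Depth_(p (ε_s p)) (T^β_(s * ε_s p))`. -/
theorem wklSel_sound (c : ℕ → ℕ → Bool) (hc : ∀ i j, c i j = c j i)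
    (β : ℕ → ℕ) (hβ : IdealSkolem c β) :
    ∀ (s : List Bool) (p : Bool → ℕ),
      Depth c β s (p (wklSel c β s p) + 1) →
      Depth c β (s ++ [wklSel c β s p]) (p (wklSel c β s p)) := by
  classical
  -- prefix closure of Tp
  have Tp_prefix : ∀ (u w : List Bool) (k : ℕ), Tp c (u ++ w) k → Tp c u k := by
    rintro u w k ⟨k', h1, h2, h3⟩
    refine ⟨k', le_trans (by simp) h1, h2, fun i h => ?_⟩
    have := h3 i (by simp; omega)
    simpa [List.getElem_append_left h] using this
  have TB_prefix : ∀ (u w : List Bool), TB c β (u ++ w) → TB c β u := by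
    intro u w h
    exact hβ u _ (Tp_prefix u w _ h)
  have Depth_mono : ∀ (u : List Bool) (m n : ℕ), m ≤ n → Depth c β u n → Depth c β u m := by
    rintro u m n hmn ⟨t, htl, hTB⟩
    refine ⟨t.take m, by simp [htl]; omega, ?_⟩
    apply TB_prefix (u ++ t.take m) (t.drop m)
    rw [List.append_assoc, List.take_append_drop]
    exact hTB
  have Depth_split : ∀ (u : List Bool) (n : ℕ), Depth c β u (n + 1) →
      ∃ b, Depth c β (u ++ [b]) n := by
    rintro u n ⟨t, htl, hTB⟩
    cases t with
    | nil => simp at htl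
    | cons b t' =>
      refine ⟨b, t', by simpa using htl, ?_⟩
      simpa using hTB
  intro s p
  unfold wklSel
  by_cases h : Depth c β s (p false + 1) → Depth c β (s ++ [false]) (p false)
  · rw [if_pos h]; exact h
  · rw [if_neg h]
    push_neg at h
    obtain ⟨hd, hnd⟩ := h
    intro hdep
    by_cases hle : p true ≤ p false
    · -- use the branch witnessing Depth s (p false + 1)
      obtain ⟨b, hb⟩ := Depth_split s (p false) hd
      cases b with
      | false => exact absurd hb hnd
      | true => exact Depth_mono _ _ _ hle hb
    · obtain ⟨b, hb⟩ := Depth_split s (p true) hdep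
      cases b with
      | false => exact absurd (Depth_mono _ _ _ (by omega) hb) hnd
      | true => exact hb
end

section
/- For every n : ℕ and every p : ℕ → ℕ there exists i ≤ 2^n such that for all 0-1 sequences s of length n, T'(s, p^{i+1}(0)) → T'(s, p^i(0)) (where p^i denotes the i-fold iterate of p). Consequently, defining δ_n p = p^i(0) for the least such i, one has for all 0-1 sequences s of length n: T'(s, p(δ_n p)) → T'(s, δ_n p). -/
open Classical in
/-- The selection function interpreting `Π⁰₁` countable choice for the Skolem function:
`deltaSel c n p = p^[i] 0` for the least `i` such that, for all 0-1 sequences `s` of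
length `n`, `T' (s, p^[i+1] 0) → T' (s, p^[i] 0)` (and `0` if no such `i` exists). -/
noncomputable def deltaSel (c : ℕ → ℕ → Bool) (n : ℕ) (p : ℕ → ℕ) : ℕ :=
  if h : ∃ i, ∀ s : List Bool, s.length = n →
      (Tp c s (p^[i + 1] 0) → Tp c s (p^[i] 0))
  then p^[Nat.find h] 0 else 0

/-- For every `n` and `p` there is an `i ≤ 2^n` with
`T' (s, p^[i+1] 0) → T' (s, p^[i] 0)` for all 0-1 sequences `s` of length `n`;
consequently `δ_n p = p^[i] 0` for the least such `i` satisfies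
`T' (s, p (δ_n p)) → T' (s, δ_n p)` for all such `s`. -/
theorem deltaSel_sound (c : ℕ → ℕ → Bool) (hc : ∀ i j, c i j = c j i)
    (n : ℕ) (p : ℕ → ℕ) :
    (∃ i ≤ 2 ^ n, ∀ s : List Bool, s.length = n →
      (Tp c s (p^[i + 1] 0) → Tp c s (p^[i] 0))) ∧
    (∀ s : List Bool, s.length = n →
      (Tp c s (p (deltaSel c n p)) → Tp c s (deltaSel c n p))) := by
  classical
  have hmono : ∀ (s : List Bool) (k k' : ℕ), k ≤ k' → Tp c s k → Tp c s k' := by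
    rintro s k k' hkk ⟨m, h1, h2, h3⟩
    exact ⟨m, h1, le_trans h2 hkk, h3⟩
  have key : ∃ i ≤ 2 ^ n, ∀ s : List Bool, s.length = n →
      (Tp c s (p^[i + 1] 0) → Tp c s (p^[i] 0)) := by
    by_contra hcon
    push_neg at hcon
    choose w hw1 hw2 hw3 using hcon
    -- p^[i] 0 is strictly increasing on the relevant range
    have hlt : ∀ i ≤ 2 ^ n, p^[i] 0 < p^[i + 1] 0 := by
      intro i hi
      by_contra hle
      push_neg at hle
      exact hw3 i hi (hmono _ _ _ hle (hw2 i hi))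
    set S : ℕ → Finset (Fin n → Bool) :=
      fun i => Finset.univ.filter (fun f => Tp c (List.ofFn f) (p^[i] 0)) with hS
    have hofFn : ∀ (s : List Bool) (hs : s.length = n),
        ∃ f : Fin n → Bool, List.ofFn f = s := by
      intro s hs
      refine ⟨fun j : Fin n => s[(j : ℕ)]'(by rw [hs]; exact j.isLt), ?_⟩
      apply List.ext_getElem
      · simp [hs]
      · intro i h1 h2
        simp
    have hcard : ∀ i ≤ 2 ^ n + 1, i ≤ (S i).card := by
      intro i
      induction i with
      | zero => intro _; exact Nat.zero_le _
      | succ i ih =>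
        intro hi
        have hi' : i ≤ 2 ^ n := by omega
        have hsub : S i ⊂ S (i + 1) := by
          constructor
          · intro f hf
            simp only [hS, Finset.mem_filter, Finset.mem_univ, true_and] at hf ⊢
            exact hmono _ _ _ (le_of_lt (hlt i hi')) hf
          · intro hcontra
            obtain ⟨f, hfs⟩ := hofFn (w i hi') (hw1 i hi')
            have hmem : f ∈ S (i + 1) := by
              simp only [hS, Finset.mem_filter, Finset.mem_univ, true_and]
              rw [hfs]; exact hw2 i hi'
            have := hcontra hmem
            simp only [hS, Finset.mem_filter, Finset.mem_univ, true_and] at this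
            rw [hfs] at this
            exact hw3 i hi' this
        have := Finset.card_lt_card hsub
        have := ih (by omega)
        omega
    have h1 : 2 ^ n + 1 ≤ (S (2 ^ n + 1)).card := hcard _ le_rfl
    have h2 : (S (2 ^ n + 1)).card ≤ 2 ^ n := by
      calc (S (2 ^ n + 1)).card ≤ Finset.univ.card := Finset.card_le_univ _
        _ = 2 ^ n := by simp [Fintype.card_fun]
    omega
  refine ⟨key, ?_⟩
  obtain ⟨i, _, hkey⟩ := key
  have hex : ∃ i, ∀ s : List Bool, s.length = n →
      (Tp c s (p^[i + 1] 0) → Tp c s (p^[i] 0)) := ⟨i, hkey⟩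
  intro s hs hT
  have hds : deltaSel c n p = p^[Nat.find hex] 0 := by
    rw [deltaSel, dif_pos hex]
  rw [hds] at hT ⊢
  have : p (p^[Nat.find hex] 0) = p^[Nat.find hex + 1] 0 :=
    (Function.iterate_succ_apply' p _ 0).symm
  rw [this] at hT
  exact Nat.find_spec hex s hs hT
end

section
/- For every functional ω : (ℕ → Bool) → (ℕ → ℕ) → ℕ there exist α : ℕ → Bool and β : ℕ → ℕ such that for every n ≤ ω α β there exists k with n ≤ k ≤ β n such that for all i < n, α i = 0 ↔ i ≺ k. -/
def GoodSet (c : ℕ → ℕ → Bool) (s : List Bool) : Set ℕ :=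
  {k | ∀ i (h : i < s.length), (s[i]'h = false ↔ ERprec c i k)}

lemma goodset_nil (c : ℕ → ℕ → Bool) : (GoodSet c []).Infinite := by
  have : GoodSet c [] = Set.univ := by
    ext k; simp [GoodSet]
  rw [this]; exact Set.infinite_univ

lemma mem_goodset_concat (c : ℕ → ℕ → Bool) (s : List Bool) (b : Bool) (k : ℕ) :
    k ∈ GoodSet c (s ++ [b]) ↔ k ∈ GoodSet c s ∧ (b = false ↔ ERprec c s.length k) := by
  constructor
  · intro h
    refine ⟨fun i hi => ?_, ?_⟩
    · have := h i (by simp; omega)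
      rwa [List.getElem_append_left hi] at this
    · have := h s.length (by simp)
      rwa [List.getElem_concat_length] at this
      · rfl
  · rintro ⟨h1, h2⟩ i hi
    simp only [List.length_append, List.length_singleton] at hi
    rcases Nat.lt_or_ge i s.length with h | h
    · rw [List.getElem_append_left h]; exact h1 i h
    · obtain rfl : i = s.length := by omega
      simpa using h2

lemma goodset_step (c : ℕ → ℕ → Bool) (s : List Bool) (h : (GoodSet c s).Infinite) :
    ∃ b, (GoodSet c (s ++ [b])).Infinite := by
  classical
  have hsub : GoodSet c s ⊆ GoodSet c (s ++ [false]) ∪ GoodSet c (s ++ [true]) := by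
    intro k hk
    by_cases hp : ERprec c s.length k
    · left; rw [mem_goodset_concat]; exact ⟨hk, by simp [hp]⟩
    · right; rw [mem_goodset_concat]; exact ⟨hk, by simp [hp]⟩
  have := (h.mono hsub)
  rcases Set.infinite_union.mp this with h' | h'
  · exact ⟨false, h'⟩
  · exact ⟨true, h'⟩

noncomputable def branch (c : ℕ → ℕ → Bool) :
    (n : ℕ) → {s : List Bool // s.length = n ∧ (GoodSet c s).Infinite}
  | 0 => ⟨[], rfl, goodset_nil c⟩
  | n+1 =>
    let p := branch c n
    ⟨p.1 ++ [Classical.choose (goodset_step c p.1 p.2.2)],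
      by simp [p.2.1], Classical.choose_spec (goodset_step c p.1 p.2.2)⟩

lemma branch_prefix (c : ℕ → ℕ → Bool) {m n : ℕ} (h : m ≤ n) :
    (branch c m).1 <+: (branch c n).1 := by
  induction n with
  | zero =>
    obtain rfl : m = 0 := Nat.le_zero.mp h
    exact List.prefix_rfl
  | succ n ih =>
    rcases Nat.lt_or_ge m (n+1) with h' | h'
    · refine (ih (by omega)).trans ?_
      show (branch c n).1 <+: (branch c n).1 ++ _
      exact List.prefix_append _ _
    · have : m = n + 1 := by omega
      subst this; exact List.prefix_rfl

/-- No-counterexample interpretation of the existence of an infinite branch of the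
Erdős–Rado tree: for every `ω` there are `α` and `β` such that every initial segment of
`α` of length `n ≤ ω α β` encodes a branch of the Erdős–Rado tree, witnessed by some
`k ∈ [n, β n]`. -/
theorem er_branch_nci (c : ℕ → ℕ → Bool) (hc : ∀ i j, c i j = c j i)
    (ω : (ℕ → Bool) → (ℕ → ℕ) → ℕ) :
    ∃ (α : ℕ → Bool) (β : ℕ → ℕ), ∀ n ≤ ω α β, ∃ k, n ≤ k ∧ k ≤ β n ∧
      ∀ i < n, (α i = false ↔ ERprec c i k) := by
  classical
  set α : ℕ → Bool := fun i => (branch c (i+1)).1[i]'(by rw [(branch c (i+1)).2.1]; omega)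
    with hα
  have hmem : ∀ n : ℕ, ∃ k ∈ GoodSet c (branch c n).1, n < k := fun n =>
    ((branch c n).2.2).exists_gt n
  set β : ℕ → ℕ := fun n => Classical.choose (hmem n) with hβ
  refine ⟨α, β, fun n _ => ?_⟩
  obtain ⟨hk, hnk⟩ := Classical.choose_spec (hmem n)
  refine ⟨β n, Nat.le_of_lt hnk, le_rfl, fun i hi => ?_⟩
  have hpre := branch_prefix c (show i + 1 ≤ n by omega)
  have hget : α i = (branch c n).1[i]'(by rw [(branch c n).2.1]; omega) := by
    rw [hα]
    exact hpre.getElem (by rw [(branch c (i+1)).2.1]; omega)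
  rw [hget]
  exact hk i (by rw [(branch c n).2.1]; omega)
end
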